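/- For d > α > 0 and 0 < β < d-α, define F(β) = 2^α · Γ((α+β)/2)·Γ((d-β)/2) / (Γ(β/2)·Γ((d-α-β)/2)), extended by F(0) = F(d-α) = 0. Then F attains its maximum on [0, d-α] uniquely at β_c = (d-α)/2, and F is strictly increasing on [0, β_c]. -/

import Mathlib

/-!
Put `s = d - α` and `D(x) = log Γ(x + α/2) - log Γ(x)`. For `0 < β < s`,
`F β = 2^α · exp (D(β/2) + D(s/2 - β/2))`, and the exponent is symmetric under `β ↦ s - β`; so
everything follows once `D` is strictly concave on `(0, ∞)` (the monotonicity of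
`ψ((α+β)/2) - ψ(β/2)`). Euler's limit `log Γ(x) = lim (x log n + log n! - ∑_{m ≤ n} log (x + m))`
exhibits `D` as a limit of sums of the concave functions `x ↦ log (x + m) - log (x + m + α/2)`, and
`Γ(x + 1) = x Γ(x)` gives `D(x) = log x - log (x + α/2) + D(x + 1)`, whence strictness.
-/

open Real Filter Set Topology

theorem ConcaveOn.sum {𝕜 E β ι : Type*} [Semiring 𝕜] [PartialOrder 𝕜] [AddCommMonoid E]
    [AddCommMonoid β] [PartialOrder β] [IsOrderedAddMonoid β] [SMul 𝕜 E] [Module 𝕜 β]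
    {S : Set E} (hS : Convex 𝕜 S) {t : Finset ι} {f : ι → E → β}
    (hf : ∀ i ∈ t, ConcaveOn 𝕜 S (f i)) : ConcaveOn 𝕜 S fun x => ∑ i ∈ t, f i x := by
  simpa only [← Finset.sum_fn] using
    Finset.sum_induction f (ConcaveOn 𝕜 S) (fun _ _ => ConcaveOn.add)
      (by exact concaveOn_const (0 : β) hS) hf

theorem ConcaveOn.of_tendsto {E ι : Type*} [AddCommGroup E] [Module ℝ E] {l : Filter ι} [l.NeBot]
    {S : Set E} {f : ι → E → ℝ} {g : E → ℝ} (hS : Convex ℝ S) (hf : ∀ i, ConcaveOn ℝ S (f i))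
    (hlim : ∀ x ∈ S, Tendsto (fun i => f i x) l (𝓝 (g x))) : ConcaveOn ℝ S g := by
  refine ⟨hS, fun x hx y hy p q hp hq hpq => ?_⟩
  exact le_of_tendsto_of_tendsto (((hlim x hx).const_smul p).add ((hlim y hy).const_smul q))
    (hlim _ (hS hx hy hp hq hpq)) (Eventually.of_forall fun i => (hf i).2 hx hy hp hq hpq)

theorem strictConcaveOn_log_sub_log_add {a : ℝ} (ha : 0 < a) :
    StrictConcaveOn ℝ (Ioi 0) fun x => log x - log (x + a) := by
  have hderiv : ∀ x ∈ Ioi (0 : ℝ), deriv (fun x => log x - log (x + a)) x = a / (x * (x + a)) := by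
    intro x (hx : 0 < x)
    have hasDeriv : HasDerivAt (fun x => log x - log (x + a)) (x⁻¹ - 1 / (x + a)) x :=
      (hasDerivAt_log hx.ne').sub (((hasDerivAt_id' x).add_const a).log (by positivity))
    rw [hasDeriv.deriv]
    field_simp
    ring
  refine StrictAntiOn.strictConcaveOn_of_deriv (convex_Ioi 0) ?_ ?_
  · exact ContinuousOn.sub (continuousOn_log.mono fun x (hx : 0 < x) => hx.ne')
      (ContinuousOn.log (by fun_prop) fun x (hx : 0 < x) => by positivity)
  · rw [interior_Ioi]
    intro x hx y hy hxy
    rw [hderiv x hx, hderiv y hy]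
    have hx : 0 < x := hx
    exact div_lt_div_of_pos_left ha (by positivity) (by gcongr)

noncomputable def logGammaRatio (a x : ℝ) : ℝ := log (Gamma (x + a)) - log (Gamma x)

theorem logGammaSeq_add_sub_logGammaSeq (a x : ℝ) (n : ℕ) :
    BohrMollerup.logGammaSeq (x + a) n - BohrMollerup.logGammaSeq x n =
      a * log n + ∑ m ∈ Finset.range (n + 1), (log (x + m) - log (x + m + a)) := by
  simp only [BohrMollerup.logGammaSeq, Finset.sum_sub_distrib, add_right_comm x a]
  ring

theorem concaveOn_logGammaRatio {a : ℝ} (ha : 0 < a) : ConcaveOn ℝ (Ioi 0) (logGammaRatio a) := by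
  have hterm (m : ℕ) : ConcaveOn ℝ (Ioi 0) fun x => log (x + m) - log (x + m + a) :=
    ((strictConcaveOn_log_sub_log_add ha).concaveOn.translate_left (m : ℝ)).subset
      (fun x (hx : 0 < x) => show 0 < (m : ℝ) + x by positivity) (convex_Ioi 0)
  refine ConcaveOn.of_tendsto (l := atTop) (convex_Ioi 0) (fun n => ?_) fun x (hx : 0 < x) =>
    (BohrMollerup.tendsto_log_gamma (by positivity)).sub (BohrMollerup.tendsto_log_gamma hx)
  simp only [logGammaSeq_add_sub_logGammaSeq]
  exact (concaveOn_const _ (convex_Ioi 0)).add (ConcaveOn.sum (convex_Ioi 0) fun m _ => hterm m)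

theorem logGammaRatio_eq_add_one {a x : ℝ} (ha : 0 ≤ a) (hx : 0 < x) :
    logGammaRatio a x = log x - log (x + a) + logGammaRatio a (x + 1) := by
  have hxa : 0 < x + a := by positivity
  rw [logGammaRatio, logGammaRatio, add_right_comm, Gamma_add_one hxa.ne', Gamma_add_one hx.ne',
    log_mul hxa.ne' (Gamma_pos_of_pos hxa).ne', log_mul hx.ne' (Gamma_pos_of_pos hx).ne']
  ring

theorem strictConcaveOn_logGammaRatio {a : ℝ} (ha : 0 < a) :
    StrictConcaveOn ℝ (Ioi 0) (logGammaRatio a) := by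
  have hshift : ConcaveOn ℝ (Ioi 0) fun x => logGammaRatio a (x + 1) :=
    ((concaveOn_logGammaRatio ha).translate_left 1).subset
      (fun x (hx : 0 < x) => show 0 < 1 + x by positivity) (convex_Ioi 0)
  exact ((strictConcaveOn_log_sub_log_add ha).add_concaveOn hshift).congr
    fun x (hx : 0 < x) => (logGammaRatio_eq_add_one ha.le hx).symm

theorem Gamma_add_mul_Gamma_add_div {a x y : ℝ} (ha : 0 ≤ a) (hx : 0 < x) (hy : 0 < y) :
    Gamma (x + a) * Gamma (y + a) / (Gamma x * Gamma y) =
      exp (logGammaRatio a x + logGammaRatio a y) := by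
  have hpos {z : ℝ} (hz : 0 < z) : 0 < Gamma z := Gamma_pos_of_pos hz
  rw [logGammaRatio, logGammaRatio, exp_add, exp_sub, exp_sub,
    exp_log (hpos (by positivity)), exp_log (hpos hx), exp_log (hpos (by positivity)),
    exp_log (hpos hy), mul_div_mul_comm]

theorem StrictConcaveOn.add_apply_sub_lt {f : ℝ → ℝ} {S : Set ℝ} (hf : StrictConcaveOn ℝ S f)
    {m x y : ℝ} (hx : x ∈ S) (hmx : m - x ∈ S) (hxy : x < y) (hym : 2 * y ≤ m) :
    f x + f (m - x) < f y + f (m - y) := by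
  have hden : 0 < m - 2 * x := by linarith
  -- `y` and `m - y` are the combinations of `x` and `m - x` with weights `(t, 1 - t)`, `(1 - t, t)`.
  set t := (m - x - y) / (m - 2 * x)
  have ht : t * (m - 2 * x) = m - x - y := div_mul_cancel₀ _ hden.ne'
  have ht0 : 0 < t := div_pos (by linarith) hden
  have ht1 : 0 < 1 - t := by rw [sub_pos, div_lt_one hden]; linarith
  have hne : x ≠ m - x := by linarith
  have hy := hf.2 hx hmx hne ht0 ht1 (by ring)
  have hmy := hf.2 hx hmx hne ht1 ht0 (by ring)
  simp only [smul_eq_mul] at hy hmy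
  rw [show t * x + (1 - t) * (m - x) = y by linear_combination -ht] at hy
  rw [show (1 - t) * x + t * (m - x) = m - y by linear_combination ht] at hmy
  linarith

theorem strictMonoOn_Icc_and_lt_apply_half {F : ℝ → ℝ} {s : ℝ} (hs : 0 < s)
    (h0 : F 0 = 0) (hs0 : F s = 0) (hpos : ∀ β ∈ Ioo 0 s, 0 < F β)
    (hsymm : ∀ β ∈ Ioo 0 s, F (s - β) = F β) (hmono : StrictMonoOn F (Ioc 0 (s / 2))) :
    StrictMonoOn F (Icc 0 (s / 2)) ∧ ∀ β ∈ Icc 0 s, β ≠ s / 2 → F β < F (s / 2) := by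
  have hmono' : StrictMonoOn F (Icc 0 (s / 2)) := by
    intro x hx y hy hxy
    rcases hx.1.eq_or_lt with rfl | hx0
    · rw [h0]; exact hpos y ⟨hxy, by linarith [hy.2]⟩
    · exact hmono ⟨hx0, hx.2⟩ ⟨hx0.trans hxy, hy.2⟩ hxy
  have hcentre : s / 2 ∈ Icc 0 (s / 2) := ⟨by positivity, le_rfl⟩
  refine ⟨hmono', fun β hβ hne => ?_⟩
  rcases hne.lt_or_gt with hlt | hgt
  · exact hmono' ⟨hβ.1, hlt.le⟩ hcentre hlt
  rcases hβ.2.eq_or_lt with rfl | hβs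
  · rw [hs0]; exact hpos _ ⟨by positivity, by linarith⟩
  · rw [← hsymm β ⟨by linarith, hβs⟩]
    exact hmono' ⟨by linarith, by linarith⟩ hcentre (by linarith)

theorem F_max_at_center (d α : ℝ) (hα : 0 < α) (hd : α < d)
    (F : ℝ → ℝ)
    (hF : ∀ β ∈ Set.Ioo (0:ℝ) (d - α),
      F β = 2 ^ α * (Gamma ((α + β) / 2) * Gamma ((d - β) / 2)) /
        (Gamma (β / 2) * Gamma ((d - α - β) / 2)))
    (hF0 : F 0 = 0) (hFend : F (d - α) = 0) :
    StrictMonoOn F (Set.Icc (0:ℝ) ((d - α) / 2)) ∧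
      ∀ β ∈ Set.Icc (0:ℝ) (d - α), β ≠ (d - α) / 2 → F β < F ((d - α) / 2) := by
  set s := d - α
  have hs : 0 < s := sub_pos.2 hd
  have hF' : ∀ β ∈ Ioo 0 s,
      F β = 2 ^ α *
        exp (logGammaRatio (α / 2) (β / 2) + logGammaRatio (α / 2) (s / 2 - β / 2)) := by
    rintro β ⟨hβ0, hβs⟩
    rw [hF β ⟨hβ0, hβs⟩, mul_div_assoc, ← Gamma_add_mul_Gamma_add_div (by positivity)
      (by positivity) (by linarith)]
    congr 5 <;> ring
  refine strictMonoOn_Icc_and_lt_apply_half hs hF0 hFend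
    (fun β hβ => by rw [hF' β hβ]; positivity) (fun β hβ => ?_) ?_
  · rw [hF' β hβ, hF' (s - β) ⟨by linarith [hβ.2], by linarith [hβ.1]⟩, add_comm]
    ring_nf
  · intro β₁ hβ₁ β₂ hβ₂ hlt
    rw [hF' β₁ ⟨hβ₁.1, by linarith [hβ₁.2]⟩, hF' β₂ ⟨hβ₂.1, by linarith [hβ₂.2]⟩]
    gcongr 2 ^ α * exp ?_
    exact (strictConcaveOn_logGammaRatio (by positivity)).add_apply_sub_lt
      (show 0 < β₁ / 2 by linarith [hβ₁.1]) (show 0 < s / 2 - β₁ / 2 by linarith [hβ₁.2])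
      (by linarith) (by linarith [hβ₂.2])
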